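/- arXiv:1705.10462 — 2 statements merged into one kernel-verified Lean document; each statement's English description precedes it below -/
import Mathlib

section
/- Let N ≥ 2, let M ≥ 1, let ρ_1, …, ρ_M be N×N density matrices, and let w_1, …, w_M be nonnegative reals with ∑_i w_i = 1. Define P̄ = ∑_i w_i · P(ρ_i), C̄ = ∑_i w_i · C(ρ_i), and Ē = ∑_i w_i · sqrt(S_L(ρ_i)). Then P̄² + C̄² + Ē² ≤ 1. -/
/-!
For a single state write `p_i = ρ_ii` and let `k` attain the maximal `p_k`. Cauchy–Schwarz over
the `N - 1` other diagonal entries gives `(1 - p_k)² ≤ (N - 1)(∑ p_i² - p_k²)`, and over the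
`N(N - 1)` off-diagonal entries `(∑_{i≠j} |ρ_ij|)² ≤ N(N - 1) ∑_{i≠j} |ρ_ij|²`. As
`tr ρ² = ∑ p_i² + ∑_{i≠j} |ρ_ij|²`, these two bounds add up to `P² + C² + S_L ≤ 1`.
Nonnegativity of the `2 × 2` principal minors gives `|ρ_ij|² ≤ p_i p_j`, hence `tr ρ² ≤ 1` and
`S_L = (√S_L)²`, and the averaged inequality follows from `(∑ w_i x_i)² ≤ ∑ w_i x_i²`.
-/

open Matrix BigOperators ComplexOrder

/-- The largest diagonal entry (as a real number) of a complex matrix. -/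
noncomputable def maxDiag (N : ℕ) (ρ : Matrix (Fin N) (Fin N) ℂ) : ℝ :=
  ⨆ k, (ρ k k).re

/-- The which-path predictability P(ρ) = (N·p₁ − 1)/(N − 1). -/
noncomputable def pred (N : ℕ) (ρ : Matrix (Fin N) (Fin N) ℂ) : ℝ :=
  ((N : ℝ) * maxDiag N ρ - 1) / ((N : ℝ) - 1)

/-- The l₁ quantum coherence C(ρ) = (1/(N−1)) ∑_{i ≠ k} |ρ_ik|. -/
noncomputable def coh (N : ℕ) (ρ : Matrix (Fin N) (Fin N) ℂ) : ℝ :=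
  (1 / ((N : ℝ) - 1)) * ∑ i, ∑ k, if i ≠ k then ‖ρ i k‖ else 0

/-- The normalized linear entropy S_L(ρ) = N(1 − tr(ρ²))/(N − 1). -/
noncomputable def linEnt (N : ℕ) (ρ : Matrix (Fin N) (Fin N) ℂ) : ℝ :=
  (N : ℝ) * (1 - ((ρ * ρ).trace).re) / ((N : ℝ) - 1)

open Finset

section OffDiag

variable {ι M : Type*} [Fintype ι] [DecidableEq ι] [AddCommMonoid M]

lemma sum_sum_eq_sum_add_sum_offDiag (f : ι → ι → M) :
    ∑ i, ∑ j, f i j = ∑ i, f i i + ∑ z ∈ univ.offDiag, f z.1 z.2 := by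
  rw [← sum_diag univ (fun z => f z.1 z.2), ← sum_union (disjoint_diag_offDiag _),
    diag_union_offDiag, sum_product]

lemma sum_sum_ite_ne_eq_sum_offDiag (f : ι → ι → M) :
    (∑ i, ∑ j, if i ≠ j then f i j else 0) = ∑ z ∈ univ.offDiag, f z.1 z.2 := by
  rw [sum_sum_eq_sum_add_sum_offDiag]
  simp only [ne_eq, not_true_eq_false, if_false, sum_const_zero, zero_add]
  exact sum_congr rfl fun z hz => if_pos (mem_offDiag.mp hz).2.2

end OffDiag

lemma sq_sum_sub_le_card_sub_one_mul {ι : Type*} [Fintype ι] [DecidableEq ι] (p : ι → ℝ)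
    (k : ι) :
    (∑ i, p i - p k) ^ 2 ≤ (Fintype.card ι - 1) * (∑ i, p i ^ 2 - p k ^ 2) := by
  have h := sq_sum_le_card_mul_sum_sq (s := univ.erase k) (f := p)
  rwa [sum_erase_eq_sub (mem_univ k), sum_erase_eq_sub (f := fun i => p i ^ 2) (mem_univ k),
    card_erase_of_mem (mem_univ k), card_univ,
    Nat.cast_sub (Fintype.card_pos_iff.mpr ⟨k⟩), Nat.cast_one] at h

namespace Matrix

variable {n : Type*} {A : Matrix n n ℂ}

lemma IsHermitian.apply_mul_apply_swap (hA : A.IsHermitian) (i j : n) :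
    A i j * A j i = (‖A i j‖ ^ 2 : ℝ) := by
  rw [← hA.apply j i, Complex.star_def, Complex.mul_conj, Complex.normSq_eq_norm_sq]

lemma PosSemidef.ofReal_re_apply_self (hA : A.PosSemidef) (i : n) : ((A i i).re : ℂ) = A i i :=
  Complex.ext rfl (Complex.nonneg_iff.mp hA.diag_nonneg).2

lemma PosSemidef.sq_norm_apply_le (hA : A.PosSemidef) (i j : n) :
    ‖A i j‖ ^ 2 ≤ (A i i).re * (A j j).re := by
  have hdet := (hA.submatrix ![i, j]).det_nonneg
  simp only [det_fin_two, submatrix_apply, cons_val_zero, cons_val_one,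
    hA.1.apply_mul_apply_swap] at hdet
  rw [← hA.ofReal_re_apply_self i, ← hA.ofReal_re_apply_self j] at hdet
  exact_mod_cast sub_nonneg.mp hdet

variable [Fintype n]

lemma IsHermitian.re_trace_mul_self (hA : A.IsHermitian) :
    (A * A).trace.re = ∑ i, ∑ j, ‖A i j‖ ^ 2 := by
  simp only [trace, diag, mul_apply, hA.apply_mul_apply_swap, Complex.re_sum, Complex.ofReal_re]

lemma re_trace (A : Matrix n n ℂ) : A.trace.re = ∑ i, (A i i).re := by
  simp only [trace, diag, Complex.re_sum]

lemma PosSemidef.re_trace_mul_self_le (hA : A.PosSemidef) :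
    (A * A).trace.re ≤ A.trace.re ^ 2 := by
  rw [hA.1.re_trace_mul_self, re_trace, sq, sum_mul_sum]
  exact sum_le_sum fun i _ => sum_le_sum fun j _ => hA.sq_norm_apply_le i j

end Matrix

variable {N : ℕ} {ρ : Matrix (Fin N) (Fin N) ℂ}

lemma linEnt_nonneg (hρ : ρ.PosSemidef) (htr : ρ.trace = 1) : 0 ≤ linEnt N ρ := by
  have hpur : (ρ * ρ).trace.re ≤ 1 := by simpa [htr] using hρ.re_trace_mul_self_le
  rcases N with _ | N
  · simp [linEnt]
  · unfold linEnt
    push_cast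
    exact div_nonneg (mul_nonneg (by positivity) (by linarith)) (by linarith)

lemma coh_eq_sum_offDiag (ρ : Matrix (Fin N) (Fin N) ℂ) :
    coh N ρ = (∑ z ∈ univ.offDiag, ‖ρ z.1 z.2‖) / ((N : ℝ) - 1) := by
  rw [coh, sum_sum_ite_ne_eq_sum_offDiag, one_div_mul_eq_div]

lemma exists_maxDiag_eq [NeZero N] (ρ : Matrix (Fin N) (Fin N) ℂ) :
    ∃ k, maxDiag N ρ = (ρ k k).re :=
  (exists_eq_ciSup_of_finite (f := fun k => (ρ k k).re)).imp fun _ h => h.symm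

lemma re_trace_mul_self_eq (hρ : ρ.PosSemidef) :
    (ρ * ρ).trace.re = ∑ i, (ρ i i).re ^ 2 + ∑ z ∈ univ.offDiag, ‖ρ z.1 z.2‖ ^ 2 := by
  rw [hρ.1.re_trace_mul_self, sum_sum_eq_sum_add_sum_offDiag]
  congr 1
  refine sum_congr rfl fun i _ => ?_
  nth_rw 1 [← hρ.ofReal_re_apply_self i]
  rw [Complex.norm_real, Real.norm_eq_abs, sq_abs]

theorem pred_sq_add_coh_sq_add_linEnt_le_one (hN : 2 ≤ N) (hρ : ρ.PosSemidef)
    (htr : ρ.trace = 1) : pred N ρ ^ 2 + coh N ρ ^ 2 + linEnt N ρ ≤ 1 := by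
  have : NeZero N := ⟨by omega⟩
  obtain ⟨k, hk⟩ := exists_maxDiag_eq ρ
  rw [pred, coh_eq_sum_offDiag, linEnt, hk, re_trace_mul_self_eq hρ]
  set n : ℝ := (N : ℝ) with hn
  set S := ∑ i, (ρ i i).re ^ 2
  set O := ∑ z ∈ univ.offDiag, ‖ρ z.1 z.2‖
  set Q := ∑ z ∈ univ.offDiag, ‖ρ z.1 z.2‖ ^ 2
  have hdiag : (1 - (ρ k k).re) ^ 2 ≤ (n - 1) * (S - (ρ k k).re ^ 2) := by
    have h := sq_sum_sub_le_card_sub_one_mul (fun i => (ρ i i).re) k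
    rwa [← re_trace, htr, Complex.one_re, Fintype.card_fin] at h
  have hoff : O ^ 2 ≤ n * (n - 1) * Q := by
    have h := sq_sum_le_card_mul_sum_sq (s := (univ : Finset (Fin N)).offDiag)
      (f := fun z => ‖ρ z.1 z.2‖)
    rwa [offDiag_card, card_univ, Fintype.card_fin, Nat.cast_sub (Nat.le_mul_self N),
      Nat.cast_mul, ← hn, show n * n - n = n * (n - 1) by ring] at h
  have hn1 : 0 < n - 1 := by
    rw [sub_pos, hn]
    exact_mod_cast hN
  have hn0 : 0 ≤ n := by positivity
  have key : (n * (ρ k k).re - 1) ^ 2 + O ^ 2 + n * (n - 1) * (1 - (S + Q)) ≤ (n - 1) ^ 2 := by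
    nlinarith [mul_le_mul_of_nonneg_left hdiag hn0]
  calc _ = ((n * (ρ k k).re - 1) ^ 2 + O ^ 2 + n * (n - 1) * (1 - (S + Q))) / (n - 1) ^ 2 := by
        field_simp
    _ ≤ 1 := (div_le_one (by positivity)).mpr key

theorem stmt13_general {N M : ℕ} (hN : 2 ≤ N)
    (ρ : Fin M → Matrix (Fin N) (Fin N) ℂ)
    (hρ : ∀ i, (ρ i).PosSemidef) (htr : ∀ i, (ρ i).trace = 1)
    (w : Fin M → ℝ) (hw : ∀ i, 0 ≤ w i) (hsum : ∑ i, w i = 1) :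
    (∑ i, w i * pred N (ρ i)) ^ 2 + (∑ i, w i * coh N (ρ i)) ^ 2 +
      (∑ i, w i * Real.sqrt (linEnt N (ρ i))) ^ 2 ≤ 1 := by
  have jensen (f : Fin M → ℝ) : (∑ i, w i * f i) ^ 2 ≤ ∑ i, w i * f i ^ 2 :=
    Real.pow_arith_mean_le_arith_mean_pow_of_even univ w f (fun i _ => hw i) hsum even_two
  calc _ ≤ ∑ i, w i * pred N (ρ i) ^ 2 + ∑ i, w i * coh N (ρ i) ^ 2
        + ∑ i, w i * Real.sqrt (linEnt N (ρ i)) ^ 2 := by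
        gcongr <;> exact jensen _
    _ = ∑ i, w i * (pred N (ρ i) ^ 2 + coh N (ρ i) ^ 2 + linEnt N (ρ i)) := by
        simp only [Real.sq_sqrt (linEnt_nonneg (hρ _) (htr _)), ← sum_add_distrib, mul_add]
    _ ≤ ∑ i, w i * 1 := by
        gcongr with i
        · exact hw i
        · exact pred_sq_add_coh_sq_add_linEnt_le_one hN (hρ i) (htr i)
    _ = 1 := by simp only [mul_one, hsum]

/-- The averaged TCR with the alternative averaging of the linear entropy:
P̄² + C̄² + Ē² ≤ 1 with Ē = ∑ w_i √(S_L(ρ_i)). -/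
theorem stmt13 {N M : ℕ} (hN : 2 ≤ N) (hM : 1 ≤ M)
    (ρ : Fin M → Matrix (Fin N) (Fin N) ℂ)
    (hρ : ∀ i, (ρ i).PosSemidef) (htr : ∀ i, (ρ i).trace = 1)
    (w : Fin M → ℝ) (hw : ∀ i, 0 ≤ w i) (hsum : ∑ i, w i = 1) :
    (∑ i, w i * pred N (ρ i)) ^ 2 + (∑ i, w i * coh N (ρ i)) ^ 2 +
      (∑ i, w i * Real.sqrt (linEnt N (ρ i))) ^ 2 ≤ 1 :=
  stmt13_general hN ρ hρ htr w hw hsum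
end

section
/- Let N > 2 and let ρ be an N×N density matrix whose diagonal consists of one entry p₁ and N−1 entries all equal to p₂ = (1 − p₁)/(N − 1) with p₁ ≥ p₂, whose off-diagonal entries all have the same modulus |a|, and suppose |a| ≤ p₂. Then 2·S_L(ρ) ≥ 1 − (P(ρ)² − C(ρ)²)². -/
open Matrix BigOperators ComplexOrder

/-! Since `p₁ + (N - 1) p₂ = 1`, the matrix has `P = p₁ - p₂` and `C = N |a|`, and counting its
entries in `tr ρ² = ∑ |ρ_ik|²` gives `S_L = 1 - P² - C²`. The claim then reads
`(1 - (P + C)²) (1 - (P - C)²) ≥ 0`, which holds because `0 ≤ P`, `0 ≤ C` and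
`C = N |a| ≤ N p₂ = 1 - P`. -/

open Finset

theorem sum_eq_add_mul_of_forall_ne {ι R : Type*} [Fintype ι] [DecidableEq ι] [CommRing R]
    (f : ι → R) (i₀ : ι) (c : R) (h : ∀ i, i ≠ i₀ → f i = c) :
    ∑ i, f i = f i₀ + ((Fintype.card ι : R) - 1) * c := by
  rw [← add_sum_erase _ _ (mem_univ i₀),
    sum_congr rfl fun i hi => h i (ne_of_mem_erase hi), sum_const,
    card_erase_of_mem (mem_univ i₀), card_univ, nsmul_eq_mul,
    Nat.cast_pred (Fintype.card_pos_iff.mpr ⟨i₀⟩)]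

theorem Matrix.IsHermitian.re_trace_mul_self_s15 {n : Type*} [Fintype n] {A : Matrix n n ℂ}
    (hA : A.IsHermitian) : (A * A).trace.re = ∑ i, ∑ j, ‖A i j‖ ^ 2 := by
  simp only [Matrix.trace, Matrix.diag, Matrix.mul_apply, Complex.re_sum]
  refine sum_congr rfl fun i _ => sum_congr rfl fun j _ => ?_
  rw [← hA.apply j i, Complex.star_def, Complex.mul_conj, Complex.ofReal_re,
    Complex.normSq_eq_norm_sq]

theorem Matrix.IsHermitian.norm_apply_self_sq {𝕜 n : Type*} [RCLike 𝕜] {A : Matrix n n 𝕜}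
    (hA : A.IsHermitian) (i : n) : ‖A i i‖ ^ 2 = RCLike.re (A i i) ^ 2 := by
  conv_lhs => rw [← hA.coe_re_apply_self i]
  rw [RCLike.norm_ofReal, sq_abs]

theorem maxDiag_eq_of_le {N : ℕ} (ρ : Matrix (Fin N) (Fin N) ℂ) (k₀ : Fin N)
    (h : ∀ k, (ρ k k).re ≤ (ρ k₀ k₀).re) : maxDiag N ρ = (ρ k₀ k₀).re :=
  have : Nonempty (Fin N) := ⟨k₀⟩
  le_antisymm (ciSup_le h) (le_ciSup (Set.finite_range fun k => (ρ k k).re).bddAbove k₀)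

theorem pred_eq_sub {N : ℕ} (ρ : Matrix (Fin N) (Fin N) ℂ) {p₁ p₂ : ℝ} (hN : (N : ℝ) ≠ 1)
    (hmax : maxDiag N ρ = p₁) (hsum : ((N : ℝ) - 1) * p₂ = 1 - p₁) :
    pred N ρ = p₁ - p₂ := by
  rw [pred, hmax, div_eq_iff (sub_ne_zero.mpr hN)]
  linear_combination hsum

theorem coh_eq_of_norm_offDiag {N : ℕ} (ρ : Matrix (Fin N) (Fin N) ℂ) {a : ℝ}
    (hN : (N : ℝ) ≠ 1) (hoff : ∀ i k, i ≠ k → ‖ρ i k‖ = a) :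
    coh N ρ = N * a := by
  have hrow : ∀ i, (∑ k, if i ≠ k then ‖ρ i k‖ else 0) = ((N : ℝ) - 1) * a := fun i => by
    rw [sum_eq_add_mul_of_forall_ne _ i a fun k hk => by rw [if_pos hk.symm, hoff i k hk.symm]]
    simp
  rw [coh, sum_congr rfl fun i _ => hrow i, sum_const, card_univ, Fintype.card_fin,
    nsmul_eq_mul]
  field_simp [sub_ne_zero.mpr hN]

theorem re_trace_mul_self_of_diag_offDiag {N : ℕ} (ρ : Matrix (Fin N) (Fin N) ℂ)
    (hρ : ρ.IsHermitian) {p₁ p₂ a : ℝ} (k₀ : Fin N) (hd₀ : (ρ k₀ k₀).re = p₁)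
    (hd : ∀ k, k ≠ k₀ → (ρ k k).re = p₂) (hoff : ∀ i k, i ≠ k → ‖ρ i k‖ = a) :
    (ρ * ρ).trace.re = p₁ ^ 2 + ((N : ℝ) - 1) * p₂ ^ 2 + N * ((N : ℝ) - 1) * a ^ 2 := by
  have hrow : ∀ i, ∑ k, ‖ρ i k‖ ^ 2 = (ρ i i).re ^ 2 + ((N : ℝ) - 1) * a ^ 2 := fun i => by
    rw [sum_eq_add_mul_of_forall_ne _ i (a ^ 2) fun k hk => by rw [hoff i k hk.symm],
      hρ.norm_apply_self_sq, Fintype.card_fin]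
    rfl
  have hdiag : ∑ i, (ρ i i).re ^ 2 = p₁ ^ 2 + ((N : ℝ) - 1) * p₂ ^ 2 := by
    rw [sum_eq_add_mul_of_forall_ne _ k₀ (p₂ ^ 2) fun k hk => by rw [hd k hk], hd₀,
      Fintype.card_fin]
  rw [hρ.re_trace_mul_self_s15, sum_congr rfl fun i _ => hrow i, sum_add_distrib, hdiag,
    sum_const, card_univ, Fintype.card_fin, nsmul_eq_mul]
  ring

theorem linEnt_eq_one_sub_sq_sub_sq {N : ℕ} (ρ : Matrix (Fin N) (Fin N) ℂ)
    (hρ : ρ.IsHermitian) {p₁ p₂ a : ℝ} (k₀ : Fin N) (hd₀ : (ρ k₀ k₀).re = p₁)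
    (hd : ∀ k, k ≠ k₀ → (ρ k k).re = p₂) (hoff : ∀ i k, i ≠ k → ‖ρ i k‖ = a)
    (hN : (N : ℝ) ≠ 1) (hsum : ((N : ℝ) - 1) * p₂ = 1 - p₁) :
    linEnt N ρ = 1 - (p₁ - p₂) ^ 2 - (N * a) ^ 2 := by
  rw [linEnt, re_trace_mul_self_of_diag_offDiag ρ hρ k₀ hd₀ hd hoff,
    div_eq_iff (sub_ne_zero.mpr hN)]
  -- the two sides differ by `1 - (p₁ + (N - 1) p₂)²`
  linear_combination (-(1 + p₁ + ((N : ℝ) - 1) * p₂)) * hsum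

theorem one_sub_sq_sub_sq_sq_le_two_mul {P C : ℝ} (hP : 0 ≤ P) (hC : 0 ≤ C)
    (hPC : P + C ≤ 1) : 1 - (P ^ 2 - C ^ 2) ^ 2 ≤ 2 * (1 - P ^ 2 - C ^ 2) := by
  have hfactor : 0 ≤ (1 - (P + C) ^ 2) * (1 - (P - C) ^ 2) :=
    mul_nonneg (by nlinarith) (by nlinarith)
  linear_combination hfactor

theorem stmt15_general {N : ℕ} (hN : 2 < N) (ρ : Matrix (Fin N) (Fin N) ℂ)
    (hρ : ρ.PosSemidef)
    (p₁ p₂ amod : ℝ) (k₀ : Fin N)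
    (hd₀ : (ρ k₀ k₀).re = p₁)
    (hd : ∀ k : Fin N, k ≠ k₀ → (ρ k k).re = p₂)
    (hp₂ : p₂ = (1 - p₁) / ((N : ℝ) - 1))
    (hord : p₂ ≤ p₁)
    (hoff : ∀ i k : Fin N, i ≠ k → ‖ρ i k‖ = amod)
    (hamod : amod ≤ p₂) :
    2 * linEnt N ρ ≥ 1 - ((pred N ρ) ^ 2 - (coh N ρ) ^ 2) ^ 2 := by
  have hN1 : (1 : ℝ) < N := by exact_mod_cast hN.trans' one_lt_two
  have hsum : ((N : ℝ) - 1) * p₂ = 1 - p₁ := by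
    rw [hp₂, mul_div_cancel₀ _ (sub_ne_zero.mpr hN1.ne')]
  have hamod0 : 0 ≤ amod :=
    hoff ⟨0, by omega⟩ ⟨1, by omega⟩ (by simp [Fin.ext_iff]) ▸ norm_nonneg _
  have hmax : maxDiag N ρ = p₁ :=
    hd₀ ▸ maxDiag_eq_of_le ρ k₀ fun k => by
      rcases eq_or_ne k k₀ with rfl | hk
      · rfl
      · rw [hd k hk, hd₀]; exact hord
  rw [pred_eq_sub ρ hN1.ne' hmax hsum, coh_eq_of_norm_offDiag ρ hN1.ne' hoff,
    linEnt_eq_one_sub_sq_sub_sq ρ hρ.isHermitian k₀ hd₀ hd hoff hN1.ne' hsum]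
  refine one_sub_sq_sub_sq_sq_le_two_mul (by linarith) (by positivity) ?_
  calc p₁ - p₂ + N * amod ≤ p₁ - p₂ + N * p₂ := by gcongr
    _ = 1 := by linear_combination hsum

/-- For N > 2 and a density matrix of the saturating form (one diagonal entry p₁,
the remaining diagonal entries all equal to p₂ = (1−p₁)/(N−1) with p₁ ≥ p₂,
all off-diagonal entries of common modulus |a| ≤ p₂), we have
2·S_L(ρ) ≥ 1 − (P(ρ)² − C(ρ)²)². -/
theorem stmt15 {N : ℕ} (hN : 2 < N) (ρ : Matrix (Fin N) (Fin N) ℂ)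
    (hρ : ρ.PosSemidef) (htr : ρ.trace = 1)
    (p₁ p₂ amod : ℝ) (k₀ : Fin N)
    (hd₀ : (ρ k₀ k₀).re = p₁)
    (hd : ∀ k : Fin N, k ≠ k₀ → (ρ k k).re = p₂)
    (hp₂ : p₂ = (1 - p₁) / ((N : ℝ) - 1))
    (hord : p₂ ≤ p₁)
    (hoff : ∀ i k : Fin N, i ≠ k → ‖ρ i k‖ = amod)
    (hamod : amod ≤ p₂) :
    2 * linEnt N ρ ≥ 1 - ((pred N ρ) ^ 2 - (coh N ρ) ^ 2) ^ 2 :=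
  stmt15_general hN ρ hρ p₁ p₂ amod k₀ hd₀ hd hp₂ hord hoff hamod
end
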